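/- arXiv:2512.21418 — 3 statements merged into one kernel-verified Lean document; each statement's English description precedes it below -/
import Mathlib

section
/- Let A → B be a weakly étale ring homomorphism (i.e., B is flat over A and B is flat over B ⊗_A B). If M is a B-module that is flat as an A-module, then M is flat as a B-module. -/
/-!
For a `B`-module `N`, the `A`-module `M ⊗[A] N` is a module over `B ⊗[A] B` (the two factors acting on
`M` and on `N`), and its base change along the multiplication map `B ⊗[A] B → B` is `M ⊗[B] N`.
So `N ↦ M ⊗[B] N` is, naturally in `N`, a retract of the composite of `N ↦ M ⊗[A] N`, which
preserves injections because `M` is `A`-flat, and `B ⊗[B ⊗[A] B] -`, which preserves injections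
because `B` is flat over `B ⊗[A] B`.
-/

open TensorProduct

namespace TensorProduct

variable {A B : Type*} [CommSemiring A] [CommSemiring B] [Algebra A B]
variable (M N : Type*) [AddCommMonoid M] [Module A M] [Module B M] [IsScalarTower A B M]
  [AddCommMonoid N] [Module A N] [Module B N] [IsScalarTower A B N]

noncomputable def tensorTensorEnd : B ⊗[A] B →ₐ[A] Module.End A (M ⊗[A] N) :=
  Module.endTensorEndAlgHom.comp
    (Algebra.TensorProduct.map (Algebra.lsmul A A M) (Algebra.lsmul A A N))

/-- Not an instance: for `M = N = B` it would compete with the multiplication of `B ⊗[A] B`. -/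
noncomputable abbrev tensorTensorModule : Module (B ⊗[A] B) (M ⊗[A] N) :=
  Module.compHom _ (tensorTensorEnd M N).toRingHom

attribute [local instance] tensorTensorModule

variable {M N} in
theorem tmul_smul_tmul (b₁ b₂ : B) (m : M) (n : N) :
    (b₁ ⊗ₜ[A] b₂) • (m ⊗ₜ[A] n) = (b₁ • m) ⊗ₜ[A] (b₂ • n) :=
  rfl

variable {M N} {N' : Type*} [AddCommMonoid N'] [Module A N'] [Module B N'] [IsScalarTower A B N']

theorem lTensor_restrictScalars_smul (f : N →ₗ[B] N') (c : B ⊗[A] B) (x : M ⊗[A] N) :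
    (f.restrictScalars A).lTensor M (c • x) = c • (f.restrictScalars A).lTensor M x := by
  induction c with
  | zero => simp only [zero_smul, map_zero]
  | add c d hc hd => simp only [add_smul, map_add, hc, hd]
  | tmul b₁ b₂ =>
    induction x with
    | zero => simp only [smul_zero, map_zero]
    | add x y hx hy => simp only [smul_add, map_add, hx, hy]
    | tmul m n => simp [tmul_smul_tmul]

noncomputable def _root_.LinearMap.lTensorTensor (f : N →ₗ[B] N') :
    M ⊗[A] N →ₗ[B ⊗[A] B] M ⊗[A] N' where
  __ := (f.restrictScalars A).lTensor M
  map_smul' := lTensor_restrictScalars_smul f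

variable (A B) in
noncomputable abbrev mulAlgebra : Algebra (B ⊗[A] B) B :=
  (Algebra.TensorProduct.lmul' A (S := B)).toRingHom.toAlgebra

attribute [local instance] mulAlgebra

theorem one_tmul_smul_eq_tmul {X : Type*} [AddCommMonoid X] [Module (B ⊗[A] B) X]
    (c : B ⊗[A] B) (x : X) :
    (1 : B) ⊗ₜ[B ⊗[A] B] (c • x) = Algebra.TensorProduct.lmul' A c ⊗ₜ x := by
  rw [← smul_tmul]
  exact congrArg (· ⊗ₜ x) (mul_one _)

variable (A M N) in
noncomputable def toBaseChangeMul : M ⊗[B] N →ₗ[B] B ⊗[B ⊗[A] B] (M ⊗[A] N) :=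
  TensorProduct.lift <| LinearMap.mk₂ B (fun m n ↦ (1 : B) ⊗ₜ (m ⊗ₜ n))
    (fun _ _ _ ↦ by rw [add_tmul, tmul_add])
    (fun b m n ↦ by
      have : (b • m) ⊗ₜ[A] n = (b ⊗ₜ[A] (1 : B)) • (m ⊗ₜ n) := by rw [tmul_smul_tmul, one_smul]
      rw [this, one_tmul_smul_eq_tmul, Algebra.TensorProduct.lmul'_apply_tmul, mul_one,
        smul_tmul', smul_eq_mul, mul_one])
    (fun _ _ _ ↦ by rw [tmul_add, tmul_add])
    (fun b m n ↦ by
      have : m ⊗ₜ[A] (b • n) = ((1 : B) ⊗ₜ[A] b) • (m ⊗ₜ n) := by rw [tmul_smul_tmul, one_smul]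
      rw [this, one_tmul_smul_eq_tmul, Algebra.TensorProduct.lmul'_apply_tmul, one_mul,
        smul_tmul', smul_eq_mul, mul_one])

@[simp]
theorem toBaseChangeMul_tmul (m : M) (n : N) :
    toBaseChangeMul A M N (m ⊗ₜ n) = (1 : B) ⊗ₜ[B ⊗[A] B] (m ⊗ₜ[A] n) :=
  rfl

variable (M N) in
theorem mapOfCompatibleSMul_smul (c : B ⊗[A] B) (x : M ⊗[A] N) :
    mapOfCompatibleSMul B A A M N (c • x) =
      Algebra.TensorProduct.lmul' A c • mapOfCompatibleSMul B A A M N x := by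
  induction c with
  | zero => simp only [zero_smul, map_zero]
  | add c d hc hd => simp only [add_smul, map_add, hc, hd]
  | tmul b₁ b₂ =>
    induction x with
    | zero => simp only [smul_zero, map_zero]
    | add x y hx hy => simp only [smul_add, map_add, hx, hy]
    | tmul m n =>
      rw [tmul_smul_tmul, mapOfCompatibleSMul_tmul, mapOfCompatibleSMul_tmul,
        Algebra.TensorProduct.lmul'_apply_tmul, ← smul_tmul', tmul_smul, smul_smul]

variable (A M N) in
noncomputable def ofBaseChangeMul :
    B ⊗[B ⊗[A] B] (M ⊗[A] N) →ₛₗ[algebraMap (B ⊗[A] B) B] M ⊗[B] N :=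
  TensorProduct.lift <| LinearMap.mk₂'ₛₗ _ _ (fun b x ↦ b • mapOfCompatibleSMul B A A M N x)
    (fun _ _ _ ↦ add_smul _ _ _)
    (fun c b x ↦ by
      rw [show c • b = algebraMap (B ⊗[A] B) B c * b from rfl, mul_smul])
    (fun _ _ _ ↦ by rw [map_add, smul_add])
    (fun c b x ↦ by
      rw [mapOfCompatibleSMul_smul, smul_comm]
      rfl)

@[simp]
theorem ofBaseChangeMul_tmul (b : B) (x : M ⊗[A] N) :
    ofBaseChangeMul A M N (b ⊗ₜ[B ⊗[A] B] x) = b • mapOfCompatibleSMul B A A M N x :=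
  rfl

theorem ofBaseChangeMul_toBaseChangeMul (y : M ⊗[B] N) :
    ofBaseChangeMul A M N (toBaseChangeMul A M N y) = y := by
  induction y with
  | zero => simp only [map_zero]
  | add x y hx hy => simp only [map_add, hx, hy]
  | tmul m n => simp

theorem toBaseChangeMul_injective : Function.Injective (toBaseChangeMul A (B := B) M N) :=
  Function.LeftInverse.injective ofBaseChangeMul_toBaseChangeMul

theorem toBaseChangeMul_lTensor (f : N →ₗ[B] N') (y : M ⊗[B] N) :
    toBaseChangeMul A M N' (f.lTensor M y) =
      (f.lTensorTensor (M := M)).lTensor B (toBaseChangeMul A M N y) := by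
  induction y with
  | zero => simp only [map_zero]
  | add x y hx hy => simp only [map_add, hx, hy]
  | tmul m n => rfl

variable (A) in
theorem lTensor_injective_of_flat_mul [Module.Flat A M] [Module.Flat (B ⊗[A] B) B]
    (f : N →ₗ[B] N') (hf : Function.Injective f) : Function.Injective (f.lTensor M) := by
  have hF : Function.Injective (f.lTensorTensor (M := M)) :=
    Module.Flat.lTensor_preserves_injective_linearMap (f.restrictScalars A) hf
  have hcomp : Function.Injective (toBaseChangeMul A M N' ∘ f.lTensor M) := by
    rw [show toBaseChangeMul A M N' ∘ f.lTensor M =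
        (f.lTensorTensor (M := M)).lTensor B ∘ toBaseChangeMul A M N from
      funext (toBaseChangeMul_lTensor f)]
    exact (Module.Flat.lTensor_preserves_injective_linearMap _ hF).comp toBaseChangeMul_injective
  exact hcomp.of_comp

end TensorProduct

theorem stmt0_general (A B M : Type*) [CommRing A] [CommRing B] [Algebra A B]
    [AddCommGroup M] [Module A M] [Module B M] [IsScalarTower A B M]
    (hmul :
      letI : Algebra (B ⊗[A] B) B := (Algebra.TensorProduct.lmul' A (S := B)).toRingHom.toAlgebra
      Module.Flat (B ⊗[A] B) B)
    [Module.Flat A M] : Module.Flat B M := by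
  let := TensorProduct.mulAlgebra A B
  have := hmul
  rw [Module.Flat.iff_lTensor_injective']
  exact fun I ↦ TensorProduct.lTensor_injective_of_flat_mul A I.subtype Subtype.val_injective

/-- If `A → B` is weakly étale (`B` flat over `A` and `B` flat over `B ⊗[A] B` via the
multiplication map) and `M` is a `B`-module which is flat over `A`, then `M` is flat over `B`. -/
theorem stmt0 (A B M : Type*) [CommRing A] [CommRing B] [Algebra A B]
    [AddCommGroup M] [Module A M] [Module B M] [IsScalarTower A B M]
    [Module.Flat A B]
    (hmul :
      letI : Algebra (B ⊗[A] B) B := (Algebra.TensorProduct.lmul' A (S := B)).toRingHom.toAlgebra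
      Module.Flat (B ⊗[A] B) B)
    [Module.Flat A M] : Module.Flat B M :=
  stmt0_general A B M hmul
end

section
/- Let (A, 𝔪) → (B, 𝔫) be a local homomorphism of Noetherian local rings, M a finitely generated B-module flat over A, and h ∈ 𝔫 such that the image of h in M/𝔪M = M ⊗_A k is a nonzerodivisor on M/𝔪M. Then h is a nonzerodivisor on M and M/hM is flat over A. -/
/-!
Over the local ring `A` with maximal ideal `𝔪`, write `f = h • -` as an `A`-linear endomorphism
of `M`. Flatness identifies `J ⊗ M` with `JM` for every ideal `J`, and `f` is split injective
on `J ⊗ M/𝔪M`, since `M/𝔪M` is a vector space over `A/𝔪`. Together these give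
`f⁻¹(𝔪JM) ∩ JM ⊆ 𝔪JM`, hence `ker f ⊆ ⋂ₙ 𝔪ⁿM`. Applied to the `A/I`-flat module `M/IM`, this
gives `f⁻¹(IM) ⊆ ⋂ₙ (𝔪ⁿM + IM)`, which is `IM` by Krull's intersection theorem for the finite
module `M/IM` over the Noetherian local ring `B`. So `h` is a nonzerodivisor on every `M/IM`:
for `I = 0` this is the first claim, and `Tor₁(A/I, M/hM) = 0` for all `I` is flatness of `M/hM`.
-/

open IsLocalRing TensorProduct LinearMap
open scoped Pointwise

theorem Ideal.smul_top_eq_restrictScalars {A B M : Type*} [CommRing A] [CommRing B]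
    [Algebra A B] [AddCommGroup M] [Module A M] [Module B M] [IsScalarTower A B M] (J : Ideal A) :
    (J • ⊤ : Submodule A M) = (J.map (algebraMap A B) • ⊤ : Submodule B M).restrictScalars A := by
  rw [Ideal.smul_restrictScalars, Submodule.restrictScalars_top]

section Tensor

variable {R M N : Type*} [CommRing R] [AddCommGroup M] [Module R M] [AddCommGroup N] [Module R N]

noncomputable def Ideal.smulMap (I : Ideal R) (M : Type*) [AddCommGroup M] [Module R M] :
    I ⊗[R] M →ₗ[R] M :=
  TensorProduct.lid R M ∘ₗ I.subtype.rTensor M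

theorem Ideal.range_smulMap (I : Ideal R) : range (I.smulMap M) = I • ⊤ :=
  Ideal.subtype_rTensor_range M I

theorem Ideal.smulMap_injective (I : Ideal R) [Module.Flat R M] :
    Function.Injective (I.smulMap M) :=
  (TensorProduct.lid R M).injective.comp (Module.Flat.iff_rTensor_injective'.mp ‹_› I)

theorem Ideal.smulMap_comp_lTensor (I : Ideal R) (f : M →ₗ[R] N) :
    I.smulMap N ∘ₗ f.lTensor I = f ∘ₗ I.smulMap M :=
  TensorProduct.ext' fun _ _ => by simp [Ideal.smulMap]

theorem Submodule.mkQ_mem_smul_top_iff (P : Submodule R M) (J : Ideal R) (m : M) :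
    P.mkQ m ∈ (J • ⊤ : Submodule R (M ⧸ P)) ↔ m ∈ J • ⊤ ⊔ P := by
  rw [← Submodule.range_mkQ P, ← Submodule.map_top, ← Submodule.map_smul'', ← Submodule.mem_comap,
    Submodule.comap_map_mkQ, sup_comm]

theorem ker_lTensor_mkQ_smul_top (Q : Type*) [AddCommGroup Q] [Module R Q] (I : Ideal R) :
    ker ((I • ⊤ : Submodule R M).mkQ.lTensor Q) = I • ⊤ := by
  apply le_antisymm
  · rw [lTensor_mkQ]
    rintro _ ⟨t, rfl⟩
    induction t using TensorProduct.induction_on with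
    | zero => simp
    | tmul q n =>
      have hn := Submodule.mem_map_of_mem (f := TensorProduct.mk R Q M q) n.2
      rw [Submodule.map_smul''] at hn
      exact Submodule.smul_mono le_rfl le_top hn
    | add s t hs ht => rw [map_add]; exact add_mem hs ht
  · refine Submodule.smul_le.mpr fun r hr t _ => ?_
    have hr : r • (I • ⊤ : Submodule R M).mkQ = 0 := by
      ext m
      exact (Submodule.Quotient.mk_eq_zero _).mpr (Submodule.smul_mem_smul hr trivial)
    rw [mem_ker, map_smul, ← LinearMap.smul_apply, ← lTensor_smul, hr, lTensor_zero,
      LinearMap.zero_apply]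

theorem lTensor_injective_of_injective_of_field {K V W : Type*} [Field K] [Algebra R K]
    (hK : Function.Surjective (algebraMap R K)) [AddCommGroup V] [Module K V] [Module R V]
    [IsScalarTower R K V] [AddCommGroup W] [Module K W] [Module R W] [IsScalarTower R K W]
    (Q : Type*) [AddCommGroup Q] [Module R Q] {g : V →ₗ[R] W} (hg : Function.Injective g) :
    Function.Injective (g.lTensor Q) := by
  obtain ⟨ℓ, hℓ⟩ := (g.extendScalarsOfSurjective hK).exists_leftInverse_of_injective
    (ker_eq_bot.mpr hg)
  have hℓ' : ℓ.restrictScalars R ∘ₗ g = .id := congr_arg (restrictScalars R) hℓ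
  refine Function.LeftInverse.injective (g := (ℓ.restrictScalars R).lTensor Q) fun t => ?_
  rw [← comp_apply, ← lTensor_comp, hℓ', lTensor_id, id_apply]

/-- The exact sequence `0 = Tor₁(R/I, M) → Tor₁(R/I, P) → N/IN → M/IM`, chased without `Tor`. -/
theorem Module.Flat.of_exact_of_comap_smul_top_le {P : Type*} [AddCommGroup P] [Module R P]
    [Module.Flat R M] {f : N →ₗ[R] M} {g : M →ₗ[R] P} (hfg : Function.Exact f g)
    (hg : Function.Surjective g) (hf : ∀ I : Ideal R, (I • ⊤ : Submodule R M).comap f ≤ I • ⊤) :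
    Module.Flat R P := by
  refine Module.Flat.iff_rTensor_injective'.mpr fun I => (injective_iff_map_eq_zero _).mpr ?_
  intro t ht
  obtain ⟨s, rfl⟩ := lTensor_surjective I hg t
  have hgs : g (I.smulMap M s) = 0 := by
    rw [← comp_apply, ← I.smulMap_comp_lTensor, comp_apply, Ideal.smulMap, comp_apply, ht,
      map_zero]
  obtain ⟨n, hn⟩ := (hfg _).mp hgs
  have hnI : n ∈ (I • ⊤ : Submodule R N) := hf I <| by
    rw [Submodule.mem_comap, hn, ← I.range_smulMap]
    exact mem_range_self _ s
  rw [← I.range_smulMap] at hnI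
  obtain ⟨u, rfl⟩ := hnI
  have hsu : s = f.lTensor I u := I.smulMap_injective <| by
    rw [← comp_apply, I.smulMap_comp_lTensor, comp_apply, hn]
  rw [hsu, ← comp_apply, ← lTensor_comp, hfg.linearMap_comp_eq_zero, lTensor_zero,
    LinearMap.zero_apply]

end Tensor

section Local

variable {R M : Type*} [CommRing R] [IsLocalRing R] [AddCommGroup M] [Module R M]
  [Module.Flat R M] {f : M →ₗ[R] M}

theorem mem_maximalIdeal_mul_smul_top
    (hf : (maximalIdeal R • ⊤ : Submodule R M).comap f ≤ maximalIdeal R • ⊤) {J : Ideal R}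
    {x : M} (hx : x ∈ (J • ⊤ : Submodule R M))
    (hfx : f x ∈ ((maximalIdeal R * J) • ⊤ : Submodule R M)) :
    x ∈ ((maximalIdeal R * J) • ⊤ : Submodule R M) := by
  set 𝔪 := maximalIdeal R
  have h𝔪J : ((𝔪 * J) • ⊤ : Submodule R M) =
      (𝔪 • ⊤ : Submodule R (J ⊗[R] M)).map (J.smulMap M) := by
    rw [Submodule.map_smul'', Submodule.map_top, J.range_smulMap, mul_smul]
  obtain ⟨t, rfl⟩ : x ∈ range (J.smulMap M) := by rwa [J.range_smulMap]
  have hft : f.lTensor J t ∈ (𝔪 • ⊤ : Submodule R (J ⊗[R] M)) := by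
    rw [← comp_apply, ← J.smulMap_comp_lTensor, comp_apply, h𝔪J] at hfx
    obtain ⟨u, hu, hut⟩ := hfx
    rwa [← J.smulMap_injective hut]
  let fbar := Submodule.mapQ _ _ f (Submodule.smul_top_le_comap_smul_top 𝔪 f)
  have hfbar : Function.Injective fbar := by
    rw [← ker_eq_bot, Submodule.ker_mapQ, ← le_bot_iff, Submodule.map_le_iff_le_comap]
    exact hf.trans (Submodule.ker_mkQ _).ge
  let := Ideal.Quotient.field 𝔪
  have ht : (𝔪 • ⊤ : Submodule R M).mkQ.lTensor J t = 0 := by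
    refine lTensor_injective_of_injective_of_field (K := R ⧸ 𝔪) Ideal.Quotient.mk_surjective J
      hfbar ?_
    rw [map_zero, ← comp_apply, ← lTensor_comp, Submodule.mapQ_mkQ, lTensor_comp, comp_apply,
      ← mem_ker, ker_lTensor_mkQ_smul_top]
    exact hft
  rw [← mem_ker, ker_lTensor_mkQ_smul_top] at ht
  rw [h𝔪J]
  exact Submodule.mem_map_of_mem ht

theorem ker_le_pow_smul_top
    (hf : (maximalIdeal R • ⊤ : Submodule R M).comap f ≤ maximalIdeal R • ⊤) (n : ℕ) :
    ker f ≤ maximalIdeal R ^ n • ⊤ := by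
  intro x hx
  induction n with
  | zero => simp
  | succ n ih =>
    rw [pow_succ']
    exact mem_maximalIdeal_mul_smul_top hf ih (by rw [mem_ker.mp hx]; exact zero_mem _)

theorem comap_smul_top_le_pow_smul_top_sup
    (hf : (maximalIdeal R • ⊤ : Submodule R M).comap f ≤ maximalIdeal R • ⊤) (I : Ideal R)
    (n : ℕ) : (I • ⊤ : Submodule R M).comap f ≤ maximalIdeal R ^ n • ⊤ ⊔ I • ⊤ := by
  rcases eq_or_ne I ⊤ with rfl | hI
  · simp
  have : Nontrivial (R ⧸ I) := Ideal.Quotient.nontrivial_iff.mpr hI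
  have : IsLocalRing (R ⧸ I) := .of_surjective' _ Ideal.Quotient.mk_surjective
  set N := (I • ⊤ : Submodule R M)
  have : Module.Flat (R ⧸ I) (M ⧸ N) := .of_linearEquiv
    ((quotTensorEquivQuotSMul M I).extendScalarsOfSurjective Ideal.Quotient.mk_surjective).symm
  let fbar : (M ⧸ N) →ₗ[R ⧸ I] (M ⧸ N) :=
    (N.mapQ N f (Submodule.smul_top_le_comap_smul_top I f)).extendScalarsOfSurjective
      Ideal.Quotient.mk_surjective
  have hmem (J : Ideal R) (m : M) : N.mkQ m ∈
      (J.map (algebraMap R (R ⧸ I)) • ⊤ : Submodule (R ⧸ I) (M ⧸ N)) ↔ m ∈ J • ⊤ ⊔ N := by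
    rw [← Submodule.restrictScalars_mem R, ← Ideal.smul_top_eq_restrictScalars,
      Submodule.mkQ_mem_smul_top_iff]
  have hmax : maximalIdeal (R ⧸ I) = (maximalIdeal R).map (algebraMap R (R ⧸ I)) :=
    (map_maximalIdeal_of_surjective _ Ideal.Quotient.mk_surjective).symm
  have hfbar : (maximalIdeal (R ⧸ I) • ⊤ : Submodule (R ⧸ I) (M ⧸ N)).comap fbar ≤
      maximalIdeal (R ⧸ I) • ⊤ := by
    intro x hx
    obtain ⟨m, rfl⟩ := N.mkQ_surjective x
    have hN : maximalIdeal R • ⊤ ⊔ N = maximalIdeal R • ⊤ :=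
      sup_eq_left.mpr (Submodule.smul_mono_left (le_maximalIdeal hI))
    replace hx : N.mkQ (f m) ∈ (maximalIdeal (R ⧸ I) • ⊤ : Submodule (R ⧸ I) (M ⧸ N)) := hx
    rw [hmax, hmem, hN] at hx ⊢
    exact hf hx
  intro m hm
  have := ker_le_pow_smul_top hfbar n
    (show fbar (N.mkQ m) = 0 from (Submodule.Quotient.mk_eq_zero _).mpr hm)
  rwa [hmax, ← Ideal.map_pow, hmem] at this

end Local

theorem Submodule.mem_of_forall_mem_pow_smul_top_sup {R M : Type*} [CommRing R]
    [IsNoetherianRing R] [IsLocalRing R] [AddCommGroup M] [Module R M] [Module.Finite R M]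
    (N : Submodule R M) {m : M} (h : ∀ n : ℕ, m ∈ maximalIdeal R ^ n • ⊤ ⊔ N) : m ∈ N := by
  rw [← Submodule.Quotient.mk_eq_zero]
  exact IsHausdorff.haus' (I := maximalIdeal R) _ fun n =>
    SModEq.zero.mpr ((N.mkQ_mem_smul_top_iff _ m).mpr (h n))

theorem comap_smul_top_le_smul_top {A B M : Type*} [CommRing A] [CommRing B] [IsLocalRing A]
    [IsLocalRing B] [IsNoetherianRing B] [Algebra A B] [IsLocalHom (algebraMap A B)]
    [AddCommGroup M] [Module A M] [Module B M] [IsScalarTower A B M] [Module.Finite B M]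
    [Module.Flat A M] {f : M →ₗ[A] M}
    (hf : (maximalIdeal A • ⊤ : Submodule A M).comap f ≤ maximalIdeal A • ⊤) (I : Ideal A) :
    (I • ⊤ : Submodule A M).comap f ≤ I • ⊤ := by
  intro m hm
  rw [Ideal.smul_top_eq_restrictScalars (B := B), Submodule.restrictScalars_mem]
  refine Submodule.mem_of_forall_mem_pow_smul_top_sup _ fun n => ?_
  have h𝔪 : (maximalIdeal A ^ n).map (algebraMap A B) ≤ maximalIdeal B ^ n := by
    rw [Ideal.map_pow]
    exact Ideal.pow_right_mono (map_maximalIdeal_le _) n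
  have := comap_smul_top_le_pow_smul_top_sup hf I n hm
  rw [Ideal.smul_top_eq_restrictScalars (B := B) (_ ^ n),
    Ideal.smul_top_eq_restrictScalars (B := B) I, ← Submodule.restrictScalars_sup,
    Submodule.restrictScalars_mem] at this
  exact sup_le_sup_right
    (Submodule.smul_mono_left h𝔪 : _ ≤ (maximalIdeal B ^ n • ⊤ : Submodule B M)) _ this

theorem stmt12_general (A B M : Type*) [CommRing A] [CommRing B] [IsLocalRing A] [IsLocalRing B]
    [IsNoetherianRing B] [Algebra A B] [IsLocalHom (algebraMap A B)]
    [AddCommGroup M] [Module A M] [Module B M] [IsScalarTower A B M] [Module.Finite B M]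
    [Module.Flat A M] (h : B)
    (hreg : ∀ m : M ⧸ ((maximalIdeal A).map (algebraMap A B) • (⊤ : Submodule B M)),
      h • m = 0 → m = 0) :
    (∀ m : M, h • m = 0 → m = 0) ∧
      Module.Flat A (M ⧸ ((Ideal.span {h} : Ideal B) • (⊤ : Submodule B M))) := by
  let f : M →ₗ[A] M := (LinearMap.lsmul B M h).restrictScalars A
  have hf : ∀ I : Ideal A, (I • ⊤ : Submodule A M).comap f ≤ I • ⊤ :=
    comap_smul_top_le_smul_top (B := B) fun m hm => by
      rw [Submodule.mem_comap] at hm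
      rw [Ideal.smul_top_eq_restrictScalars (B := B), Submodule.restrictScalars_mem,
        ← Submodule.Quotient.mk_eq_zero] at hm ⊢
      exact hreg _ hm
  refine ⟨fun m hm => ?_, ?_⟩
  · have hker := hf ⊥
    rw [Submodule.bot_smul] at hker
    exact (Submodule.mem_bot A).mp (hker ((Submodule.mem_bot A).mpr hm))
  · rw [Submodule.ideal_span_singleton_smul]
    have hexact : Function.Exact f ((h • ⊤ : Submodule B M).mkQ.restrictScalars A) :=
      fun x => by simp [f, Submodule.mem_smul_pointwise_iff_exists]
    refine Module.Flat.of_exact_of_comap_smul_top_le hexact ?_ hf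
    rw [LinearMap.coe_restrictScalars]
    exact Submodule.mkQ_surjective _

/-- Slicing criterion for flatness.  Let `(A,𝔪) → (B,𝔫)` be a local homomorphism of
Noetherian local rings, `M` a finite `B`-module flat over `A`, and `h ∈ 𝔫` whose image is a
nonzerodivisor on `M/𝔪M`.  Then `h` is a nonzerodivisor on `M` and `M/hM` is flat over `A`. -/
theorem stmt12 (A B M : Type*) [CommRing A] [CommRing B] [IsLocalRing A] [IsLocalRing B]
    [IsNoetherianRing A] [IsNoetherianRing B] [Algebra A B] [IsLocalHom (algebraMap A B)]
    [AddCommGroup M] [Module A M] [Module B M] [IsScalarTower A B M] [Module.Finite B M]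
    [Module.Flat A M] (h : B) (hh : h ∈ maximalIdeal B)
    (hreg : ∀ m : M ⧸ ((maximalIdeal A).map (algebraMap A B) • (⊤ : Submodule B M)),
      h • m = 0 → m = 0) :
    (∀ m : M, h • m = 0 → m = 0) ∧
      Module.Flat A (M ⧸ ((Ideal.span {h} : Ideal B) • (⊤ : Submodule B M))) :=
  stmt12_general A B M h hreg
end

section
/- Let f : X → Y and g : Y → Z be morphisms in a site-like setting with a contravariant functor F valued in spaces, and define a morphism to be 'of F-descent' if F of the target is the limit of F applied to the Čech nerve of the morphism, and 'of universal F-descent' if every base change is of F-descent. Then: (1) if g ∘ f is of universal F-descent, so is g; (2) if f is of universal F-descent and g is of F-descent, then g ∘ f is of F-descent. -/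
/-!
Write `f^*` for restriction of sections along `f`. A morphism `h : U ⟶ V` is of `F`-descent iff
`h^*` is injective and hits every section over `U` whose two pullbacks to `U ×_V U` agree.

(1) A section `b` over the base change `Y_W` of `g` restricts to a section over `X_W` which descends
along the base change of `g ∘ f`; that the descended section restricts back to `b` is checked after
pulling back to `X_W ×_W Y_W`, itself a base change of `g ∘ f`, along which restriction is
injective.

(2) A section `b` over `X` compatible for `g ∘ f` is compatible for `f`, so `b = f^* a₁`. Two
sections over `Y ×_Z Y` may be compared after pulling back twice along base changes of `f`, which
turns the compatibility of `a₁` for `g` into that of `b` for `g ∘ f`; so `a₁` descends along `g`.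
-/

open CategoryTheory CategoryTheory.Limits Opposite

variable {C : Type u} [Category.{v} C] [HasPullbacks C]

/-- A morphism `h : U ⟶ V` is of `F`-descent (for a presheaf of sets `F`) if `F V` is the
equalizer of `F U ⇉ F (U ×_V U)`, i.e. every section over `U` equalized by the two
projections of the Čech nerve descends uniquely to `V`. -/
def IsFDescent (F : Cᵒᵖ ⥤ Type w) {U V : C} (h : U ⟶ V) : Prop :=
  ∀ b : F.obj (op U),
    F.map (pullback.fst h h).op b = F.map (pullback.snd h h).op b →
      ∃! a : F.obj (op V), F.map h.op a = b

/-- `h` is of universal `F`-descent if every base change of `h` is of `F`-descent. -/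
def IsUniversalFDescent (F : Cᵒᵖ ⥤ Type w) {U V : C} (h : U ⟶ V) : Prop :=
  ∀ {W : C} (g : W ⟶ V), IsFDescent F (pullback.snd h g)

def IsFCompatible (F : Cᵒᵖ ⥤ Type w) {U V : C} (h : U ⟶ V) (b : F.obj (op U)) : Prop :=
  F.map (pullback.fst h h).op b = F.map (pullback.snd h h).op b

variable {F : Cᵒᵖ ⥤ Type w}

namespace IsFCompatible

variable {U V : C} {h : U ⟶ V} {b : F.obj (op U)}

lemma map_eq (hb : IsFCompatible F h b) {P : C} {φ ψ : P ⟶ U} (hφψ : φ ≫ h = ψ ≫ h) :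
    F.map φ.op b = F.map ψ.op b := by
  obtain ⟨l, rfl, rfl⟩ : ∃ l : P ⟶ pullback h h,
      l ≫ pullback.fst h h = φ ∧ l ≫ pullback.snd h h = ψ :=
    ⟨pullback.lift φ ψ hφψ, pullback.lift_fst _ _ _, pullback.lift_snd _ _ _⟩
  simp only [op_comp, Functor.map_comp_apply]
  exact congrArg _ hb

lemma of_forall_map_eq
    (hb : ∀ {P : C} (φ ψ : P ⟶ U), φ ≫ h = ψ ≫ h → F.map φ.op b = F.map ψ.op b) :
    IsFCompatible F h b :=
  hb _ _ pullback.condition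

lemma precomp (hb : IsFCompatible F h b) {U' : C} (t : U' ⟶ U) :
    IsFCompatible F (t ≫ h) (F.map t.op b) :=
  of_forall_map_eq fun φ ψ hφψ => by
    simp only [← Functor.map_comp_apply, ← op_comp]
    exact hb.map_eq (by simpa only [Category.assoc] using hφψ)

lemma of_comp {W : C} {g : V ⟶ W} (hb : IsFCompatible F (h ≫ g) b) : IsFCompatible F h b :=
  of_forall_map_eq fun φ ψ hφψ => hb.map_eq (by rw [reassoc_of% hφψ])

end IsFCompatible

lemma isFCompatible_map {U V : C} (h : U ⟶ V) (a : F.obj (op V)) :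
    IsFCompatible F h (F.map h.op a) := by
  simp only [IsFCompatible, ← Functor.map_comp_apply, ← op_comp, pullback.condition]

lemma isFDescent_iff {U V : C} {h : U ⟶ V} :
    IsFDescent F h ↔ Function.Injective (F.map h.op) ∧
      ∀ b, IsFCompatible F h b → ∃ a, F.map h.op a = b := by
  refine ⟨fun hh => ⟨fun a a' e => ?_, fun b hb => (hh b hb).exists⟩, fun ⟨hinj, hex⟩ b hb => ?_⟩
  · exact (hh _ (isFCompatible_map h a)).unique rfl e.symm
  · obtain ⟨a, ha⟩ := hex b hb
    exact ⟨a, ha, fun a' ha' => hinj (ha'.trans ha.symm)⟩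

lemma IsFDescent.injective {U V : C} {h : U ⟶ V} (hh : IsFDescent F h) :
    Function.Injective (F.map h.op) :=
  (isFDescent_iff.1 hh).1

lemma IsFDescent.exists_map_eq {U V : C} {h : U ⟶ V} (hh : IsFDescent F h) {b : F.obj (op U)}
    (hb : IsFCompatible F h b) : ∃ a, F.map h.op a = b :=
  (hh b hb).exists

omit [HasPullbacks C] in
lemma injective_map_iso_hom_comp {A B T : C} (i : A ≅ B) {q : B ⟶ T}
    (hq : Function.Injective (F.map q.op)) : Function.Injective (F.map (i.hom ≫ q).op) := by
  rw [op_comp, F.map_comp, types_comp]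
  exact ((isIso_iff_bijective (F.map i.hom.op)).1 inferInstance).injective.comp hq

lemma IsFDescent.iso_hom_comp {A B T : C} (i : A ≅ B) {q : B ⟶ T} (hq : IsFDescent F q) :
    IsFDescent F (i.hom ≫ q) := by
  refine isFDescent_iff.2 ⟨injective_map_iso_hom_comp i hq.injective, fun b hb => ?_⟩
  have hb' : IsFCompatible F q (F.map i.inv.op b) := by
    simpa only [Iso.inv_hom_id_assoc] using hb.precomp i.inv
  obtain ⟨a, ha⟩ := hq.exists_map_eq hb'
  refine ⟨a, ?_⟩
  rw [op_comp, Functor.map_comp_apply, ha, ← Functor.map_comp_apply, ← op_comp,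
    Iso.hom_inv_id, op_id, Functor.map_id_apply]

lemma isFDescent_of_comp {U' U V : C} (t : U' ⟶ U) (h : U ⟶ V) {s : U' ⟶ V} (hts : t ≫ h = s)
    (hs : IsFDescent F s) (hinj : Function.Injective (F.map (pullback.snd s h).op)) :
    IsFDescent F h := by
  subst hts
  refine isFDescent_iff.2 ⟨fun a a' e => hs.injective ?_, fun b hb => ?_⟩
  · simp only [op_comp, Functor.map_comp_apply, e]
  obtain ⟨a, ha⟩ := hs.exists_map_eq (hb.precomp t)
  refine ⟨a, hinj ?_⟩
  have hb' : F.map (pullback.fst (t ≫ h) h ≫ t).op b = F.map (pullback.snd (t ≫ h) h).op b :=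
    hb.map_eq (by simpa only [Category.assoc] using pullback.condition)
  rw [← hb', ← Functor.map_comp_apply, ← op_comp, ← pullback.condition, op_comp,
    Functor.map_comp_apply, ha, ← Functor.map_comp_apply, ← op_comp]

namespace IsUniversalFDescent

variable {X Y Z : C} {f : X ⟶ Y}

lemma isFDescent (hf : IsUniversalFDescent F f) : IsFDescent F f := by
  simpa using (hf (𝟙 Y)).iso_hom_comp (asIso (pullback.fst f (𝟙 Y))).symm

lemma of_comp {g : Y ⟶ Z} (H : IsUniversalFDescent F (f ≫ g)) : IsUniversalFDescent F g :=
  fun {W} w => by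
    refine isFDescent_of_comp (pullback.map (f ≫ g) w g w f (𝟙 W) (𝟙 Z) (by simp) (by simp))
      (pullback.snd g w) (pullback.lift_snd _ _ _ |>.trans (Category.comp_id _)) (H w) ?_
    rw [← pullbackLeftPullbackSndIso_hom_snd]
    exact injective_map_iso_hom_comp _ (H _).injective

lemma map_eq_of_map_comp {g : Y ⟶ Z} (hf : IsUniversalFDescent F f) {a : F.obj (op Y)}
    (ha : IsFCompatible F (f ≫ g) (F.map f.op a)) {P : C} {φ ψ : P ⟶ Y} (hφψ : φ ≫ g = ψ ≫ g) :
    F.map φ.op a = F.map ψ.op a := by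
  set s₁ := pullback.snd f φ
  set s₂ := pullback.snd f (s₁ ≫ ψ)
  have h₁ : s₂ ≫ s₁ ≫ φ = (s₂ ≫ pullback.fst f φ) ≫ f := by
    rw [← pullback.condition, Category.assoc]
  have h₂ : s₂ ≫ s₁ ≫ ψ = pullback.fst f (s₁ ≫ ψ) ≫ f := pullback.condition.symm
  have h₃ : (s₂ ≫ pullback.fst f φ) ≫ f ≫ g = pullback.fst f (s₁ ≫ ψ) ≫ f ≫ g := by
    rw [← Category.assoc, ← h₁, ← reassoc_of% h₂]
    simp only [Category.assoc, hφψ]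
  apply (hf φ).injective
  apply (hf (s₁ ≫ ψ)).injective
  simp only [← Functor.map_comp_apply, ← op_comp]
  rw [h₁, h₂]
  simpa only [op_comp, Functor.map_comp_apply] using ha.map_eq h₃

lemma isFDescent_comp {g : Y ⟶ Z} (hf : IsUniversalFDescent F f) (hg : IsFDescent F g) :
    IsFDescent F (f ≫ g) := by
  refine isFDescent_iff.2 ⟨fun a a' e => hg.injective (hf.isFDescent.injective ?_), fun b hb => ?_⟩
  · simpa only [op_comp, Functor.map_comp_apply] using e
  obtain ⟨a₁, rfl⟩ := hf.isFDescent.exists_map_eq hb.of_comp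
  obtain ⟨a, rfl⟩ := hg.exists_map_eq
    (IsFCompatible.of_forall_map_eq fun φ ψ => hf.map_eq_of_map_comp hb)
  exact ⟨a, by rw [op_comp, Functor.map_comp_apply]⟩

end IsUniversalFDescent

/-- Liu–Zheng descent lemma: (1) if `g ∘ f` is of universal `F`-descent, so is `g`;
(2) if `f` is of universal `F`-descent and `g` is of `F`-descent, then `g ∘ f` is of
`F`-descent. -/
theorem stmt14 (F : Cᵒᵖ ⥤ Type w) {X Y Z : C} (f : X ⟶ Y) (g : Y ⟶ Z) :
    (IsUniversalFDescent F (f ≫ g) → IsUniversalFDescent F g) ∧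
    (IsUniversalFDescent F f → IsFDescent F g → IsFDescent F (f ≫ g)) :=
  ⟨IsUniversalFDescent.of_comp, IsUniversalFDescent.isFDescent_comp⟩
end
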